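/- The permutation of the vertices of the Heawood graph has no element of order 14 and no element of order 21; equivalently, in the automorphism group of the Heawood graph, no element of order 2 commutes with an element of order 7, and no element of order 3 commutes with an element of order 7. -/

import Mathlib

/-!
An automorphism of order 7 that fixes a vertex permutes its three neighbours, so it fixes them
too, and by connectedness it is trivial: elements of order 7 act freely. Hence if `γ` has order
`7 q` with `q` coprime to 7, every `γ`-orbit has length 7 or 14, and some orbit has length 14,
since otherwise `γ ^ 7 = 1`. For `q = 3` this contradicts `14 ∤ 21`. For `q = 2`, `γ` acts
regularly, so the Heawood graph is a circulant graph on `ℤ/14` of odd degree 3; then every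
vertex `v` is adjacent to its antipode `γ ^ 7 • v`, and for another neighbour `γ ^ n • v` the
vertices `v, γ ^ n • v, γ ^ (n + 7) • v, γ ^ 7 • v` form a 4-cycle, which the Heawood graph
does not have.
Commuting elements of orders 2 (or 3) and 7 would have a product of order 14 (or 21).
-/

/-- The Heawood graph `C₁₄` on vertex set `ZMod 14`: distinct vertices `i` and `j` are
adjacent iff `j = i ± 1`, or `i` is even and `j = i + 5`, or `i` is odd and `j = i - 5`
(LCF notation `[5, -5]⁷`). -/
def heawood : SimpleGraph (ZMod 14) where
  Adj i j := i ≠ j ∧ (j = i + 1 ∨ j = i - 1 ∨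
    (i.val % 2 = 0 ∧ j = i + 5) ∨ (i.val % 2 = 1 ∧ j = i - 5))
  symm := by constructor; intro i j h; revert i j; decide
  loopless := by constructor; intro i h; revert i h; decide

open MulAction

namespace MulAction

variable {M α : Type*} [Monoid M] [MulAction M α]

theorem injOn_pow_smul_Iio_period (g : M) (a : α) :
    (Set.Iio (period g a)).InjOn (fun n => g ^ n • a) := by
  simpa only [smul_iterate_apply, period_eq_minimalPeriod] using
    Function.iterate_injOn_Iio_minimalPeriod (f := (g • ·)) (x := a)

theorem period_le_card_of_forall_pow_smul_mem {g : M} {a : α} {s : Finset α}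
    (h : ∀ n, g ^ n • a ∈ s) : period g a ≤ s.card := by
  simpa using Finset.card_le_card_of_injOn (s := Finset.range (period g a)) (fun n => g ^ n • a)
    (fun n _ => h n) (by simpa using injOn_pow_smul_Iio_period g a)

theorem smul_eq_of_pow_prime_eq_one {p : ℕ} (hp : p.Prime) {g : M} (hg : g ^ p = 1) {a : α}
    {s : Finset α} (h : ∀ n, g ^ n • a ∈ s) (hs : s.card < p) : g • a = a := by
  have hdvd : period g a ∣ p := pow_smul_eq_iff_period_dvd.mp (by rw [hg, one_smul])
  rcases (Nat.dvd_prime hp).mp hdvd with h1 | hp'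
  · exact period_eq_one_iff.mp h1
  · exact absurd (period_le_card_of_forall_pow_smul_mem h) (by omega)

theorem exists_pow_smul_eq_of_period_eq_card [Fintype α] {g : M} {a : α}
    (h : period g a = Fintype.card α) (b : α) : ∃ n, g ^ n • a = b := by
  classical
  have himage : (Finset.range (period g a)).image (fun n => g ^ n • a) = Finset.univ := by
    apply Finset.eq_univ_of_card
    rw [Finset.card_image_of_injOn (by simpa using injOn_pow_smul_Iio_period g a),
      Finset.card_range, h]
  obtain ⟨n, -, hn⟩ := Finset.mem_image.mp (himage.symm ▸ Finset.mem_univ b :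
    b ∈ (Finset.range (period g a)).image (fun n => g ^ n • a))
  exact ⟨n, hn⟩

theorem pow_eq_one_of_forall_period_dvd [FaithfulSMul M α] {g : M} {n : ℕ}
    (h : ∀ a : α, period g a ∣ n) : g ^ n = 1 :=
  eq_of_smul_eq_smul (α := α) fun a => by rw [one_smul, pow_smul_eq_iff_period_dvd]; exact h a

section Group

variable {G α : Type*} [Group G] [MulAction G α]

theorem zpow_neg_smul_eq_of_zpow_smul_eq {g : G} {a : α} {i j : ℤ}
    (h : g ^ i • a = g ^ j • a) : g ^ (-i) • a = g ^ (-j) • a :=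
  calc g ^ (-i) • a = g ^ (-i - j) • g ^ j • a := by
        rw [smul_smul, ← zpow_add, sub_add_cancel]
    _ = g ^ (-i - j) • g ^ i • a := by rw [h]
    _ = g ^ (-j) • a := by rw [smul_smul, ← zpow_add, show -i - j + i = -j by ring]

theorem zpow_smul_eq_self_or_pow_smul_of_period_eq_two_mul {g : G} {a : α} {m : ℕ}
    (hper : period g a = 2 * m) {k : ℤ} (h : g ^ (2 * k) • a = a) :
    g ^ k • a = a ∨ g ^ k • a = g ^ m • a := by
  rw [zpow_smul_eq_iff_period_dvd, hper, Nat.cast_mul, Nat.cast_two,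
    mul_dvd_mul_iff_left two_ne_zero] at h
  obtain ⟨j, rfl⟩ := h
  rcases Int.even_or_odd' j with ⟨i, rfl | rfl⟩
  · left
    rw [zpow_smul_eq_iff_period_dvd, hper]
    exact ⟨i, by push_cast; ring⟩
  · right
    have hfix : g ^ ((2 * m : ℕ) * i : ℤ) • a = a :=
      zpow_smul_eq_iff_period_dvd.mpr (hper ▸ dvd_mul_right _ _)
    calc g ^ ((m : ℤ) * (2 * i + 1)) • a
        = g ^ (m : ℤ) • g ^ ((2 * m : ℕ) * i : ℤ) • a := by
          rw [smul_smul, ← zpow_add]; push_cast; ring_nf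
      _ = g ^ m • a := by rw [hfix, zpow_natCast]

end Group

end MulAction

namespace SimpleGraph

variable {V : Type*} {G : SimpleGraph V}

theorem adj_smul_smul_iff (σ : G ≃g G) {u w : V} : G.Adj (σ • u) (σ • w) ↔ G.Adj u w :=
  σ.map_adj_iff

theorem adj_pow_smul_of_period_eq_two_mul [G.LocallyFinite] {γ : G ≃g G} {v : V}
    (horbit : ∀ w, ∃ n : ℕ, γ ^ n • v = w) (hodd : Odd (G.degree v)) {m : ℕ}
    (hper : period γ v = 2 * m) : G.Adj v (γ ^ m • v) := by
  by_contra hno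
  choose k hk using horbit
  replace hk (w : V) : γ ^ (k w : ℤ) • v = w := by rw [zpow_natCast, hk]
  -- the reflection `γ ^ n • v ↦ γ ^ (-n) • v` of the orbit through `v`
  let ρ (w : V) : V := γ ^ (-(k w : ℤ)) • v
  have hρ_adj {w : V} (hw : G.Adj v w) : G.Adj v (ρ w) := by
    have hv : γ ^ (-(k w : ℤ)) • w = v :=
      calc γ ^ (-(k w : ℤ)) • w = γ ^ (-(k w : ℤ)) • γ ^ (k w : ℤ) • v := by
            rw [hk w]
        _ = v := by rw [zpow_neg, inv_smul_smul]
    have := (adj_smul_smul_iff (γ ^ (-(k w : ℤ)))).mpr hw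
    rwa [hv, adj_comm] at this
  have hρ_ρ (w : V) : ρ (ρ w) = w := by
    have := zpow_neg_smul_eq_of_zpow_smul_eq (hk (ρ w))
    rwa [neg_neg, hk] at this
  have hρ_ne {w : V} (hw : G.Adj v w) : ρ w ≠ w := by
    intro h
    have h2 : γ ^ (2 * (k w : ℤ)) • v = v :=
      calc γ ^ (2 * (k w : ℤ)) • v = γ ^ (k w : ℤ) • γ ^ (k w : ℤ) • v := by
            rw [smul_smul, ← zpow_add, two_mul]
        _ = γ ^ (k w : ℤ) • γ ^ (-(k w : ℤ)) • v := by rw [(hk w).trans h.symm]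
        _ = v := by rw [smul_smul, ← zpow_add, add_neg_cancel, zpow_zero, one_smul]
    rcases zpow_smul_eq_self_or_pow_smul_of_period_eq_two_mul hper h2 with h' | h'
    · exact hw.ne (h'.symm.trans (hk w))
    · exact hno ((hk w).symm.trans h' ▸ hw)
  -- `ρ` is a fixed-point-free involution of the neighbourhood of `v`, so the degree is even
  have hsum := Finset.sum_involution (s := G.neighborFinset v) (f := fun _ => (1 : ZMod 2))
    (fun w _ => ρ w) (fun _ _ => by decide)
    (fun w hw _ => hρ_ne ((mem_neighborFinset _ _ _).mp hw))
    (fun w hw => (mem_neighborFinset _ _ _).mpr (hρ_adj ((mem_neighborFinset _ _ _).mp hw)))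
    (fun w _ => hρ_ρ w)
  rw [Finset.sum_const, nsmul_one, card_neighborFinset_eq_degree,
    ZMod.natCast_eq_zero_iff_even] at hsum
  exact Nat.not_even_iff_odd.mpr hodd hsum

theorem eq_one_of_pow_prime_eq_one_of_smul_eq [G.LocallyFinite] (hG : G.Connected) {p : ℕ}
    (hp : p.Prime) (hdeg : ∀ v, G.degree v < p) {σ : G ≃g G} (hσ : σ ^ p = 1) {v : V}
    (hv : σ • v = v) : σ = 1 := by
  have hnbr : ∀ {u w}, G.Adj u w → σ • u = u → σ • w = w := by
    intro u w huw hu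
    refine smul_eq_of_pow_prime_eq_one hp hσ (s := G.neighborFinset u) (fun n => ?_) (hdeg u)
    have hun : σ ^ n • u = u :=
      pow_smul_eq_iff_period_dvd.mpr (by rw [period_eq_one_iff.mpr hu]; exact one_dvd n)
    rw [mem_neighborFinset, ← hun]
    exact (adj_smul_smul_iff _).mpr huw
  have hwalk : ∀ {u w} (q : G.Walk u w), σ • u = u → σ • w = w := by
    intro u w q
    induction q with
    | nil => exact id
    | cons huw _ ih => exact fun hu => ih (hnbr huw hu)
  exact eq_of_smul_eq_smul fun w => (hwalk (hG.preconnected v w).some hv).trans (one_smul _ w).symm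

end SimpleGraph

open SimpleGraph

instance : DecidableRel heawood.Adj := fun i j =>
  inferInstanceAs (Decidable (i ≠ j ∧ _))

theorem heawood_adj_add_one (i : ZMod 14) : heawood.Adj i (i + 1) := by
  revert i; decide

theorem heawood_connected : heawood.Connected := by
  refine (connected_iff_exists_forall_reachable _).mpr ⟨0, fun v => ?_⟩
  have h (n : ℕ) : heawood.Reachable 0 n := by
    induction n with
    | zero => exact_mod_cast Reachable.refl 0
    | succ n ih => exact ih.trans (by exact_mod_cast (heawood_adj_add_one n).reachable)
  simpa using h v.val

theorem heawood_degree (v : ZMod 14) : heawood.degree v = 3 := by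
  revert v; decide

theorem heawood_eq_of_adj_of_adj :
    ∀ {u x y : ZMod 14}, heawood.Adj u x → heawood.Adj u y → x ≠ y →
      ∀ {w : ZMod 14}, heawood.Adj w x → heawood.Adj w y → u = w := by
  decide

theorem heawood_smul_eq_of_commute {σ τ : heawood ≃g heawood} (hc : Commute σ τ)
    (hτ : τ ^ 2 = 1) {v : ZMod 14} (hτv : heawood.Adj v (τ • v))
    (hσv : heawood.Adj v (σ • v)) :
    σ • v = τ • v := by
  by_contra hne
  -- `v` and `τ • σ • v` are two common neighbours of `σ • v` and `τ • v`
  have h₁ : heawood.Adj (τ • σ • v) (τ • v) := (adj_smul_smul_iff τ).mpr hσv.symm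
  have h₂ : heawood.Adj (τ • σ • v) (σ • v) := by
    rw [smul_smul, ← hc.eq, mul_smul]
    exact ((adj_smul_smul_iff σ).mpr hτv).symm
  have hv : v = τ • σ • v := heawood_eq_of_adj_of_adj hσv hτv hne h₂ h₁
  apply hne
  calc σ • v = τ • τ • σ • v := by rw [smul_smul, ← sq, hτ, one_smul]
    _ = τ • v := by rw [← hv]

theorem heawood_smul_ne_of_pow_seven_eq_one {σ : heawood ≃g heawood} (h7 : σ ^ 7 = 1)
    (h1 : σ ≠ 1) (v : ZMod 14) : σ • v ≠ v := fun hv =>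
  h1 (eq_one_of_pow_prime_eq_one_of_smul_eq heawood_connected (by norm_num)
    (fun u => by rw [heawood_degree]; norm_num) h7 hv)

theorem heawood_seven_dvd_period {γ : heawood ≃g heawood} {q : ℕ} (hγ : orderOf γ = 7 * q)
    (hq : q.Coprime 7) (v : ZMod 14) : 7 ∣ period γ v := by
  by_contra h
  have hq0 : q ≠ 0 := by rintro rfl; norm_num at hq
  have hdvd : period γ v ∣ q :=
    (Nat.Coprime.symm ((Nat.Prime.coprime_iff_not_dvd (by norm_num)).mpr h)).dvd_of_dvd_mul_left
      (hγ ▸ period_dvd_orderOf γ v)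
  have hord : orderOf (γ ^ q) = 7 := by
    rw [orderOf_pow_of_dvd hq0 (by rw [hγ]; exact dvd_mul_left q 7), hγ,
      Nat.mul_div_cancel _ (by omega)]
  refine heawood_smul_ne_of_pow_seven_eq_one (hord ▸ pow_orderOf_eq_one _) (fun h1 => ?_) v
    (pow_smul_eq_iff_period_dvd.mpr hdvd)
  rw [h1, orderOf_one] at hord
  omega

theorem heawood_exists_period_eq_fourteen {γ : heawood ≃g heawood} {q : ℕ}
    (hγ : orderOf γ = 7 * q) (hq : q.Coprime 7) (hq1 : q ≠ 1) :
    ∃ v : ZMod 14, period γ v = 14 := by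
  by_contra! h
  have hq0 : q ≠ 0 := by rintro rfl; norm_num at hq
  have h7 (v : ZMod 14) : period γ v ∣ 7 := by
    obtain ⟨j, hj⟩ := heawood_seven_dvd_period hγ hq v
    have hle : period γ v ≤ 14 :=
      period_le_card_of_forall_pow_smul_mem (s := Finset.univ) fun _ => Finset.mem_univ _
    have hpos : 0 < period γ v := period_pos_of_orderOf_pos (by rw [hγ]; omega) v
    have : j = 1 := by have := h v; omega
    rw [hj, this]
  have h7q := orderOf_dvd_of_pow_eq_one (pow_eq_one_of_forall_period_dvd h7)
  rw [hγ] at h7q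
  exact hq1 (Nat.dvd_one.mp (Nat.dvd_of_mul_dvd_mul_left (by norm_num) h7q))

theorem heawood_orderOf_ne_twentyone (γ : heawood ≃g heawood) : orderOf γ ≠ 21 := by
  intro h
  obtain ⟨v, hv⟩ := heawood_exists_period_eq_fourteen (q := 3) h (by norm_num) (by norm_num)
  have := period_dvd_orderOf γ v
  rw [hv, h] at this
  norm_num at this

theorem heawood_orderOf_ne_fourteen (γ : heawood ≃g heawood) : orderOf γ ≠ 14 := by
  intro h
  obtain ⟨v, hv⟩ := heawood_exists_period_eq_fourteen (q := 2) h (by norm_num) (by norm_num)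
  have horbit := exists_pow_smul_eq_of_period_eq_card (hv.trans (ZMod.card 14).symm)
  have hanti : heawood.Adj v (γ ^ 7 • v) :=
    adj_pow_smul_of_period_eq_two_mul horbit (by rw [heawood_degree]; decide) hv
  obtain ⟨w, hw, hne⟩ := Finset.exists_mem_ne (s := heawood.neighborFinset v)
    (by rw [card_neighborFinset_eq_degree, heawood_degree]; norm_num) (γ ^ 7 • v)
  obtain ⟨n, rfl⟩ := horbit w
  exact hne (heawood_smul_eq_of_commute ((Commute.refl γ).pow_pow n 7)
    (by rw [← pow_mul, show 7 * 2 = orderOf γ by omega, pow_orderOf_eq_one]) hanti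
    ((mem_neighborFinset _ _ _).mp hw))

/-- The automorphism group of the Heawood graph has no element of order 14 and no element
of order 21; equivalently, no element of order 2 commutes with an element of order 7,
and no element of order 3 commutes with an element of order 7. -/
theorem heawood_no_order_fourteen_or_twentyone :
    (∀ α : heawood ≃g heawood, orderOf α ≠ 14 ∧ orderOf α ≠ 21) ∧
      (∀ α β : heawood ≃g heawood, orderOf α = 2 → orderOf β = 7 → ¬ Commute α β) ∧
      (∀ α β : heawood ≃g heawood, orderOf α = 3 → orderOf β = 7 → ¬ Commute α β) := by
  refine ⟨fun γ => ⟨heawood_orderOf_ne_fourteen γ, heawood_orderOf_ne_twentyone γ⟩,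
    fun α β h2 h7 hc => heawood_orderOf_ne_fourteen (α * β) ?_,
    fun α β h3 h7 hc => heawood_orderOf_ne_twentyone (α * β) ?_⟩
  · rw [hc.orderOf_mul_eq_mul_orderOf_of_coprime (by rw [h2, h7]; norm_num), h2, h7]
  · rw [hc.orderOf_mul_eq_mul_orderOf_of_coprime (by rw [h3, h7]; norm_num), h3, h7]
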